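/- (Theorem 2.5, symmetric identity with power sums) Let q be a real number with 0 < q < 1, let α > 0 be real, let h be a positive integer, let x ≥ 0 be real, let a and b be odd positive integers, and let m be a positive integer. Then [2]_{q^b} · ∑_{i=0}^{m} C(m,i) · [a]_{q^α}^{i-1} · [b]_{q^α}^{m-i} · G̃_{i,q^a}^{(α,h)}(bx) · S̃^{(α)}_{m-i : q^b, h+α(i-1)}(a) = [2]_{q^a} · ∑_{i=0}^{m} C(m,i) · [b]_{q^α}^{i-1} · [a]_{q^α}^{m-i} · G̃_{i,q^b}^{(α,h)}(ax) · S̃^{(α)}_{m-i : q^a, h+α(i-1)}(b), where C(m,i) denotes the binomial coefficient. (In the terms i = 0 the weighted (h,q)-Genocchi factor vanishes, so the negative powers [a]_{q^α}^{-1}, [b]_{q^α}^{-1} and the exponents h - α are harmless.) -/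

import Mathlib

/-- The `q`-number `[x]_q = (1 - q^x)/(1 - q)` (real exponent, via `rpow`). -/
noncomputable def qnum (q x : ℝ) : ℝ := (1 - q ^ x) / (1 - q)

/-- The weighted `(h,q)`-Genocchi polynomial
`G̃_{n,q}^{(α,h)}(x) = n·[2]_q·∑_{m≥0} (-1)^m q^{mh} [m+x]_{q^α}^{n-1}`
(for `n = 0` the prefactor `n` makes it `0`). -/
noncomputable def hqGenocchi (q α : ℝ) (h n : ℕ) (x : ℝ) : ℝ :=
  (n : ℝ) * qnum q 2 *
    ∑' m : ℕ, (-1 : ℝ) ^ m * q ^ (m * h) * (qnum (q ^ α) ((m : ℝ) + x)) ^ (n - 1)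

/-- The alternating weighted power sum
`S̃^{(α)}_{m : q, w}(a) = ∑_{j=0}^{a-1} (-1)^j q^{jw} [j]_{q^α}^m` (real weight exponent `w`). -/
noncomputable def hqPowSum (q α w : ℝ) (m a : ℕ) : ℝ :=
  ∑ j ∈ Finset.range a, (-1 : ℝ) ^ j * q ^ ((j : ℝ) * w) * (qnum (q ^ α) (j : ℝ)) ^ m

/-!
Rescaling the base, `[y]_{q^{cα}} = [c y]_{q^α} / [c]_{q^α}`, absorbs the powers of `[a]_{q^α}` and
`[b]_{q^α}`, and the weight `h + α (i - 1)` of the power sum supplies exactly the factor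
`q^{α b j (i - 1)}` that makes the `i`-th term, written with `Q = q^α`, a term of a differentiated
binomial expansion: with `i C(m,i) = m C(m-1,i-1)` and `[u + v]_Q = [u]_Q + Q^u [v]_Q`, the sum
over `i` collapses to `m [2]_{q^a} ∑_n ∑_{j<a} f(a n + b j)`, where
`f(k) = (-1)^k q^{kh} [k + a b x]_Q^{m-1}` (oddness of `a` and `b` turns `(-1)^{n+j}` into
`(-1)^{an+bj}`). Splitting `n` by residues mod `b` gives
`∑_n ∑_{j<a} f(a n + b j) = ∑_t ∑_{u<b} ∑_{j<a} f(a b t + a u + b j)`, which is symmetric in `a`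
and `b`.
-/

open Finset

section QNumber

variable {P : ℝ}

theorem qnum_nonneg (hP0 : 0 < P) (hP1 : P < 1) {y : ℝ} (hy : 0 ≤ y) : 0 ≤ qnum P y :=
  div_nonneg (sub_nonneg.2 (Real.rpow_le_one hP0.le hP1.le hy)) (sub_nonneg.2 hP1.le)

theorem qnum_le_inv_one_sub (hP0 : 0 < P) (hP1 : P < 1) (y : ℝ) : qnum P y ≤ (1 - P)⁻¹ := by
  rw [qnum, div_eq_mul_inv]
  exact mul_le_of_le_one_left (inv_nonneg.2 (sub_nonneg.2 hP1.le))
    (sub_le_self _ (Real.rpow_nonneg hP0.le y))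

theorem qnum_pos (hP0 : 0 < P) (hP1 : P < 1) {y : ℝ} (hy : 0 < y) : 0 < qnum P y :=
  div_pos (sub_pos.2 (Real.rpow_lt_one hP0.le hP1 hy)) (sub_pos.2 hP1)

theorem qnum_add (hP : 0 < P) (u v : ℝ) : qnum P (u + v) = qnum P u + P ^ u * qnum P v := by
  simp only [qnum, Real.rpow_add hP]
  ring

theorem qnum_rpow (hP0 : 0 < P) (hP1 : P < 1) {c : ℝ} (hc : 0 < c) (y : ℝ) :
    qnum (P ^ c) y = qnum P (c * y) / qnum P c := by
  have h1 : 1 - P ≠ 0 := (sub_pos.2 hP1).ne'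
  have h2 : 1 - P ^ c ≠ 0 := (sub_pos.2 (Real.rpow_lt_one hP0.le hP1 hc)).ne'
  simp only [qnum, ← Real.rpow_mul hP0.le]
  field_simp

theorem summable_neg_one_pow_mul_pow_mul_qnum_pow (hP0 : 0 < P) (hP1 : P < 1) {r : ℝ}
    (hr0 : 0 ≤ r) (hr1 : r < 1) {y : ℕ → ℝ} (hy : ∀ n, 0 ≤ y n) (N : ℕ) :
    Summable fun n => (-1 : ℝ) ^ n * r ^ n * qnum P (y n) ^ N := by
  refine ((summable_geometric_of_lt_one hr0 hr1).mul_left ((1 - P)⁻¹ ^ N)).of_norm_bounded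
    fun n => ?_
  have hy0 := qnum_nonneg hP0 hP1 (hy n)
  rw [norm_mul, norm_mul, norm_pow, norm_neg, norm_one, one_pow, one_mul, Real.norm_of_nonneg
    (pow_nonneg hr0 n), Real.norm_of_nonneg (pow_nonneg hy0 N), mul_comm]
  exact mul_le_mul_of_nonneg_right (pow_le_pow_left₀ hy0 (qnum_le_inv_one_sub hP0 hP1 _) N)
    (pow_nonneg hr0 n)

end QNumber

section PowerBase

variable {q α : ℝ}

theorem qnum_pow_rpow (hq0 : 0 < q) (hq1 : q < 1) (hα : 0 < α) {c : ℕ} (hc : 0 < c) (y : ℝ) :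
    qnum ((q ^ c) ^ α) y = qnum (q ^ α) (c * y) / qnum (q ^ α) c := by
  rw [← Real.rpow_natCast, ← Real.rpow_mul hq0.le, mul_comm, Real.rpow_mul hq0.le]
  exact qnum_rpow (Real.rpow_pos_of_pos hq0 α) (Real.rpow_lt_one hq0.le hq1 hα)
    (Nat.cast_pos.2 hc) y

theorem qnum_pow_mul_hqGenocchi (hq0 : 0 < q) (hq1 : q < 1) (hα : 0 < α) {c : ℕ} (hc : 0 < c)
    (h n : ℕ) (y : ℝ) :
    qnum (q ^ α) c ^ (n - 1) * hqGenocchi (q ^ c) α h n y =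
      n * qnum (q ^ c) 2 *
        ∑' k : ℕ, (-1 : ℝ) ^ k * (q ^ (c * h)) ^ k * qnum (q ^ α) (c * k + c * y) ^ (n - 1) := by
  have hA : qnum (q ^ α) c ≠ 0 :=
    (qnum_pos (Real.rpow_pos_of_pos hq0 α) (Real.rpow_lt_one hq0.le hq1 hα)
      (Nat.cast_pos.2 hc)).ne'
  rw [hqGenocchi, mul_left_comm, ← tsum_mul_left]
  congr 2
  funext k
  rw [qnum_pow_rpow hq0 hq1 hα hc, div_pow, ← pow_mul, ← pow_mul, mul_add]
  field_simp
  ring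

theorem qnum_pow_mul_hqPowSum (hq0 : 0 < q) (hq1 : q < 1) (hα : 0 < α) {c : ℕ} (hc : 0 < c)
    (h k N a : ℕ) :
    qnum (q ^ α) c ^ N * hqPowSum (q ^ c) α (h + α * k) N a =
      ∑ j ∈ range a, (-1 : ℝ) ^ j * (q ^ (c * h)) ^ j * ((q ^ α) ^ (c * j)) ^ k *
        qnum (q ^ α) (c * j) ^ N := by
  have hA : qnum (q ^ α) c ≠ 0 :=
    (qnum_pos (Real.rpow_pos_of_pos hq0 α) (Real.rpow_lt_one hq0.le hq1 hα)
      (Nat.cast_pos.2 hc)).ne'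
  rw [hqPowSum, mul_sum]
  refine sum_congr rfl fun j _ => ?_
  have hweight :
      (q ^ c) ^ ((j : ℝ) * (h + α * k)) = (q ^ (c * h)) ^ j * ((q ^ α) ^ (c * j)) ^ k := by
    rw [← pow_mul, ← pow_mul, ← Real.rpow_natCast, ← Real.rpow_natCast (q ^ α),
      ← Real.rpow_mul hq0.le, ← Real.rpow_natCast, ← Real.rpow_mul hq0.le,
      ← Real.rpow_add hq0]
    push_cast
    ring_nf
  rw [qnum_pow_rpow hq0 hq1 hα hc, hweight, div_pow]
  field_simp

end PowerBase

section Reindex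

variable {R : Type*} [AddCommGroup R] [UniformSpace R] [IsUniformAddGroup R] [CompleteSpace R]
  [T0Space R]

theorem tsum_eq_sum_range_tsum_mul_add {f : ℕ → R} (hf : Summable f) {N : ℕ} (hN : 0 < N) :
    ∑' n, f n = ∑ u ∈ range N, ∑' t, f (N * t + u) := by
  have : NeZero N := ⟨hN.ne'⟩
  rw [Nat.sumByResidueClasses hf N]
  refine sum_nbij' ZMod.val Nat.cast (fun j _ => mem_range.2 (ZMod.val_lt j))
    (fun _ _ => mem_univ _) (fun j _ => ZMod.natCast_zmod_val j)
    (fun u hu => ZMod.val_cast_of_lt (mem_range.1 hu)) fun j _ => ?_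
  simp only [add_comm]

theorem tsum_sum_range_mul_add_eq {f : ℕ → R} (hf : Summable f) {a b : ℕ} (ha : 0 < a)
    (hb : 0 < b) :
    ∑' n, ∑ j ∈ range a, f (a * n + b * j) =
      ∑ j ∈ range a, ∑ u ∈ range b, ∑' t, f (a * b * t + a * u + b * j) := by
  have hsum : ∀ j, Summable fun n => f (a * n + b * j) := fun j =>
    hf.comp_injective fun n n' h => Nat.eq_of_mul_eq_mul_left ha (Nat.add_right_cancel h)
  rw [Summable.tsum_finsetSum fun j _ => hsum j]
  refine sum_congr rfl fun j _ => ?_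
  rw [tsum_eq_sum_range_tsum_mul_add (hsum j) hb]
  refine sum_congr rfl fun u _ => tsum_congr fun t => ?_
  ring_nf

theorem tsum_sum_range_mul_add_comm {f : ℕ → R} (hf : Summable f) {a b : ℕ} (ha : 0 < a)
    (hb : 0 < b) :
    ∑' n, ∑ j ∈ range a, f (a * n + b * j) = ∑' n, ∑ j ∈ range b, f (b * n + a * j) := by
  rw [tsum_sum_range_mul_add_eq hf ha hb, tsum_sum_range_mul_add_eq hf hb ha, sum_comm]
  refine sum_congr rfl fun u _ => sum_congr rfl fun j _ => tsum_congr fun t => ?_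
  ring_nf

end Reindex

theorem sum_range_choose_mul_mul_pow_mul_pow {R : Type*} [CommSemiring R] (X Y : R) (m : ℕ) :
    ∑ i ∈ range (m + 1), (m.choose i : R) * i * X ^ (i - 1) * Y ^ (m - i) =
      m * (X + Y) ^ (m - 1) := by
  cases m with
  | zero => simp
  | succ m =>
    rw [sum_range_succ', add_pow, mul_sum]
    simp only [Nat.cast_zero, mul_zero, zero_mul, add_zero]
    refine sum_congr rfl fun k _ => ?_
    have hchoose : ((m + 1).choose (k + 1) : R) * (k + 1 : ℕ) = (m + 1 : ℕ) * m.choose k := by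
      norm_cast
      exact congrArg Nat.cast (Nat.add_one_mul_choose_eq m k).symm
    rw [Nat.add_sub_cancel, Nat.add_sub_cancel, Nat.add_sub_add_right, mul_assoc _ _ (X ^ k),
      ← mul_assoc, hchoose]
    push_cast
    ring

theorem sum_choose_mul_alternating_qnum_pow {Q : ℝ} (hQ : 0 < Q) (q y : ℝ) (h : ℕ) {a b : ℕ}
    (hao : Odd a) (hbo : Odd b) (m n : ℕ) :
    ∑ i ∈ range (m + 1), (m.choose i : ℝ) * i *
        ((-1 : ℝ) ^ n * (q ^ (a * h)) ^ n * qnum Q (a * n + y) ^ (i - 1)) *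
        ∑ j ∈ range a, (-1 : ℝ) ^ j * (q ^ (b * h)) ^ j * (Q ^ (b * j)) ^ (i - 1) *
          qnum Q (b * j) ^ (m - i) =
      m * ∑ j ∈ range a, (-1 : ℝ) ^ (a * n + b * j) * (q ^ h) ^ (a * n + b * j) *
        qnum Q (↑(a * n + b * j) + y) ^ (m - 1) := by
  simp only [mul_sum]
  rw [sum_comm]
  refine sum_congr rfl fun j _ => ?_
  set X := Q ^ (b * j) * qnum Q (a * n + y)
  set Y := qnum Q (b * j)
  have hXY : qnum Q (↑(a * n + b * j) + y) = X + Y := by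
    rw [show (↑(a * n + b * j) + y : ℝ) = b * j + (a * n + y) by push_cast; ring, qnum_add hQ,
      ← Nat.cast_mul, Real.rpow_natCast, Nat.cast_mul]
    ring
  have hsign : (-1 : ℝ) ^ (a * n + b * j) = (-1) ^ n * (-1) ^ j := by
    rw [pow_add, pow_mul, pow_mul, hao.neg_one_pow, hbo.neg_one_pow]
  calc _ = (-1) ^ n * (-1) ^ j * (q ^ h) ^ (a * n + b * j) *
        ∑ i ∈ range (m + 1), (m.choose i : ℝ) * i * X ^ (i - 1) * Y ^ (m - i) := by
        rw [mul_sum]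
        refine sum_congr rfl fun i _ => ?_
        ring
    _ = _ := by
        rw [sum_range_choose_mul_mul_pow_mul_pow, hXY, hsign]
        ring

theorem sum_choose_mul_hqGenocchi_mul_hqPowSum {q α x : ℝ} (hq0 : 0 < q) (hq1 : q < 1)
    (hα : 0 < α) {h : ℕ} (hh : 0 < h) (hx : 0 ≤ x) {a b : ℕ} (ha : 0 < a) (hb : 0 < b)
    (hao : Odd a) (hbo : Odd b) (m : ℕ) :
    ∑ i ∈ range (m + 1), (m.choose i : ℝ) *
        qnum (q ^ α) a ^ ((i : ℤ) - 1) * qnum (q ^ α) b ^ (m - i) *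
        hqGenocchi (q ^ a) α h i (b * x) * hqPowSum (q ^ b) α (h + α * (i - 1)) (m - i) a =
      qnum (q ^ a) 2 * m * ∑' n, ∑ j ∈ range a, (-1 : ℝ) ^ (a * n + b * j) *
        (q ^ h) ^ (a * n + b * j) * qnum (q ^ α) (↑(a * n + b * j) + a * b * x) ^ (m - 1) := by
  have hQ0 : 0 < q ^ α := Real.rpow_pos_of_pos hq0 α
  have hQ1 : q ^ α < 1 := Real.rpow_lt_one hq0.le hq1 hα
  set s : ℕ → ℕ → ℝ := fun i n =>
    (-1 : ℝ) ^ n * (q ^ (a * h)) ^ n * qnum (q ^ α) (a * n + a * (b * x)) ^ (i - 1)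
  set S : ℕ → ℝ := fun i => ∑ j ∈ range a, (-1 : ℝ) ^ j * (q ^ (b * h)) ^ j *
    ((q ^ α) ^ (b * j)) ^ (i - 1) * qnum (q ^ α) (b * j) ^ (m - i)
  have hterm : ∀ i ∈ range (m + 1), (m.choose i : ℝ) *
      qnum (q ^ α) a ^ ((i : ℤ) - 1) * qnum (q ^ α) b ^ (m - i) *
      hqGenocchi (q ^ a) α h i (b * x) * hqPowSum (q ^ b) α (h + α * (i - 1)) (m - i) a =
        qnum (q ^ a) 2 * ∑' n, (m.choose i : ℝ) * i * s i n * S i := by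
    rintro (_ | k) _
    · simp [hqGenocchi]
    have hk : ((h : ℝ) + α * (((k + 1 : ℕ) : ℝ) - 1)) = h + α * k := by push_cast; ring
    rw [Nat.cast_succ, add_sub_cancel_right, zpow_natCast, hk]
    have hG := qnum_pow_mul_hqGenocchi hq0 hq1 hα ha h (k + 1) (b * x)
    have hP := qnum_pow_mul_hqPowSum hq0 hq1 hα hb h k (m - (k + 1)) a
    rw [Nat.add_sub_cancel] at hG
    calc _ = (m.choose (k + 1) : ℝ) *
          (qnum (q ^ α) a ^ k * hqGenocchi (q ^ a) α h (k + 1) (b * x)) *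
          (qnum (q ^ α) b ^ (m - (k + 1)) * hqPowSum (q ^ b) α (h + α * k) (m - (k + 1)) a) := by
          ring
      _ = _ := by
          rw [hG, hP, tsum_mul_right, tsum_mul_left]
          simp only [s, S, Nat.add_sub_cancel]
          ring
  have hsum : ∀ i, Summable fun n => (m.choose i : ℝ) * i * s i n * S i := fun i =>
    ((summable_neg_one_pow_mul_pow_mul_qnum_pow hQ0 hQ1 (by positivity)
      (pow_lt_one₀ hq0.le hq1 (by positivity))
      (fun n => by positivity) (i - 1)).mul_left _).mul_right _
  rw [sum_congr rfl hterm, ← mul_sum, ← Summable.tsum_finsetSum fun i _ => hsum i,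
    tsum_congr fun n => sum_choose_mul_alternating_qnum_pow hQ0 q (a * (b * x)) h hao hbo m n,
    tsum_mul_left, mul_assoc (a : ℝ)]
  ring

theorem stmt8_general (q α x : ℝ) (hq0 : 0 < q) (hq1 : q < 1) (hα : 0 < α) (h : ℕ) (hh : 0 < h)
    (hx : 0 ≤ x) (a b : ℕ) (ha : 0 < a) (hb : 0 < b) (hao : Odd a) (hbo : Odd b)
    (m : ℕ) :
    qnum (q ^ b) 2 *
        ∑ i ∈ Finset.range (m + 1), (m.choose i : ℝ) *
          (qnum (q ^ α) (a : ℝ)) ^ ((i : ℤ) - 1) * (qnum (q ^ α) (b : ℝ)) ^ (m - i) *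
          hqGenocchi (q ^ a) α h i ((b : ℝ) * x) *
          hqPowSum (q ^ b) α ((h : ℝ) + α * ((i : ℝ) - 1)) (m - i) a =
      qnum (q ^ a) 2 *
        ∑ i ∈ Finset.range (m + 1), (m.choose i : ℝ) *
          (qnum (q ^ α) (b : ℝ)) ^ ((i : ℤ) - 1) * (qnum (q ^ α) (a : ℝ)) ^ (m - i) *
          hqGenocchi (q ^ b) α h i ((a : ℝ) * x) *
          hqPowSum (q ^ a) α ((h : ℝ) + α * ((i : ℝ) - 1)) (m - i) b := by
  have hsummable : Summable fun k : ℕ =>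
      (-1 : ℝ) ^ k * (q ^ h) ^ k * qnum (q ^ α) (k + a * b * x) ^ (m - 1) :=
    summable_neg_one_pow_mul_pow_mul_qnum_pow (Real.rpow_pos_of_pos hq0 α)
      (Real.rpow_lt_one hq0.le hq1 hα) (by positivity) (pow_lt_one₀ hq0.le hq1 hh.ne')
      (fun k => by positivity) (m - 1)
  rw [sum_choose_mul_hqGenocchi_mul_hqPowSum hq0 hq1 hα hh hx ha hb hao hbo,
    sum_choose_mul_hqGenocchi_mul_hqPowSum hq0 hq1 hα hh hx hb ha hbo hao, mul_comm (b : ℝ) a,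
    tsum_sum_range_mul_add_comm hsummable ha hb]
  ring

theorem stmt8 (q α x : ℝ) (hq0 : 0 < q) (hq1 : q < 1) (hα : 0 < α) (h : ℕ) (hh : 0 < h)
    (hx : 0 ≤ x) (a b : ℕ) (ha : 0 < a) (hb : 0 < b) (hao : Odd a) (hbo : Odd b)
    (m : ℕ) (hm : 0 < m) :
    qnum (q ^ b) 2 *
        ∑ i ∈ Finset.range (m + 1), (m.choose i : ℝ) *
          (qnum (q ^ α) (a : ℝ)) ^ ((i : ℤ) - 1) * (qnum (q ^ α) (b : ℝ)) ^ (m - i) *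
          hqGenocchi (q ^ a) α h i ((b : ℝ) * x) *
          hqPowSum (q ^ b) α ((h : ℝ) + α * ((i : ℝ) - 1)) (m - i) a =
      qnum (q ^ a) 2 *
        ∑ i ∈ Finset.range (m + 1), (m.choose i : ℝ) *
          (qnum (q ^ α) (b : ℝ)) ^ ((i : ℤ) - 1) * (qnum (q ^ α) (a : ℝ)) ^ (m - i) *
          hqGenocchi (q ^ b) α h i ((a : ℝ) * x) *
          hqPowSum (q ^ a) α ((h : ℝ) + α * ((i : ℝ) - 1)) (m - i) b :=
  stmt8_general q α x hq0 hq1 hα h hh hx a b ha hb hao hbo m
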